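/- arXiv:2301.00160 — 2 statements merged into one kernel-verified Lean document; each statement's English description precedes it below -/
import Mathlib

section
/- If u₁ and u₂ are plurisubharmonic functions on an open set in ℂⁿ (or more simply, convex functions on an open convex set in ℝⁿ), then max_η(u₁, u₂) is plurisubharmonic (respectively convex). -/
open MeasureTheory

/-- If `u₁`, `u₂` are convex functions on an open convex set `S ⊆ ℝⁿ`, then the
regularized maximum `max_η (u₁, u₂)` is convex on `S`.  (This is the convex
version of the statement that the regularized maximum of plurisubharmonic
functions is plurisubharmonic.) -/
theorem stmt4 (n : ℕ) (ψ : ℝ → ℝ) (hsmooth : ContDiff ℝ (⊤ : ℕ∞) ψ) (hpos : ∀ x, 0 ≤ ψ x)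
    (heven : ∀ x, ψ (-x) = ψ x) (hsupp : Function.support ψ ⊆ Set.Icc (-1) 1)
    (hint : ∫ x, ψ x = 1) (η₁ η₂ : ℝ) (hη₁ : 0 < η₁) (hη₂ : 0 < η₂)
    (maxη : ℝ → ℝ → ℝ)
    (hdef : ∀ t₁ t₂, maxη t₁ t₂ =
      ∫ h : ℝ × ℝ,
        max (t₁ + h.1) (t₂ + h.2) * (1 / (η₁ * η₂)) * ψ (h.1 / η₁) * ψ (h.2 / η₂))
    (S : Set (EuclideanSpace ℝ (Fin n))) (hS : IsOpen S) (hSc : Convex ℝ S)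
    (u₁ u₂ : EuclideanSpace ℝ (Fin n) → ℝ)
    (hu₁ : ConvexOn ℝ S u₁) (hu₂ : ConvexOn ℝ S u₂) :
    ConvexOn ℝ S (fun x => maxη (u₁ x) (u₂ x)) := by
  set w : ℝ × ℝ → ℝ := fun h => 1 / (η₁ * η₂) * ψ (h.1 / η₁) * ψ (h.2 / η₂) with hw
  set F : ℝ → ℝ → ℝ × ℝ → ℝ := fun t₁ t₂ h => max (t₁ + h.1) (t₂ + h.2) * w h with hF
  have hdef' : ∀ t₁ t₂, maxη t₁ t₂ = ∫ h : ℝ × ℝ, F t₁ t₂ h := by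
    intro t₁ t₂
    rw [hdef]
    congr 1
    funext h
    simp only [hF, hw]
    ring
  have hw0 : ∀ h, 0 ≤ w h := by
    intro h
    have : (0:ℝ) ≤ 1 / (η₁ * η₂) := by positivity
    exact mul_nonneg (mul_nonneg this (hpos _)) (hpos _)
  have hψz : ∀ x : ℝ, x ∉ Set.Icc (-1:ℝ) 1 → ψ x = 0 := by
    intro x hx
    by_contra hne
    exact hx (hsupp hne)
  have hwsupp : ∀ h : ℝ × ℝ, h ∉ (Set.Icc (-η₁) η₁ ×ˢ Set.Icc (-η₂) η₂) → w h = 0 := by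
    intro h hh
    rw [Set.mem_prod] at hh
    push_neg at hh
    by_cases h1 : h.1 ∈ Set.Icc (-η₁) η₁
    · have h2 := hh h1
      have : ψ (h.2 / η₂) = 0 := by
        apply hψz
        intro hc
        apply h2
        constructor
        · nlinarith [hc.1, (le_div_iff₀ hη₂).mp hc.1]
        · nlinarith [(div_le_iff₀ hη₂).mp hc.2]
      simp [hw, this]
    · have : ψ (h.1 / η₁) = 0 := by
        apply hψz
        intro hc
        apply h1
        constructor
        · nlinarith [(le_div_iff₀ hη₁).mp hc.1]
        · nlinarith [(div_le_iff₀ hη₁).mp hc.2]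
      simp [hw, this]
  have hwc : Continuous w := by
    apply Continuous.mul
    apply Continuous.mul continuous_const
    · exact hsmooth.continuous.comp (continuous_fst.div_const η₁)
    · exact hsmooth.continuous.comp (continuous_snd.div_const η₂)
  have hInt : ∀ t₁ t₂, Integrable (F t₁ t₂) := by
    intro t₁ t₂
    have hc : Continuous (F t₁ t₂) := by
      apply Continuous.mul _ hwc
      exact ((continuous_const.add continuous_fst).max (continuous_const.add continuous_snd))
    apply hc.integrable_of_hasCompactSupport
    apply HasCompactSupport.intro (isCompact_Icc.prod isCompact_Icc)
    intro h hh
    simp only [hF]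
    rw [hwsupp h hh, mul_zero]
  have hmono : ∀ a b a' b' : ℝ, a ≤ a' → b ≤ b' → maxη a b ≤ maxη a' b' := by
    intro a b a' b' ha hb
    rw [hdef', hdef']
    refine integral_mono (hInt _ _) (hInt _ _) fun h => ?_
    exact mul_le_mul_of_nonneg_right
      (max_le_max (by linarith) (by linarith)) (hw0 h)
  have hcvx : ∀ (a b a' b' l m : ℝ), 0 ≤ l → 0 ≤ m → l + m = 1 →
      maxη (l * a + m * a') (l * b + m * b') ≤ l * maxη a b + m * maxη a' b' := by
    intro a b a' b' l m hl hm hlm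
    rw [hdef', hdef', hdef']
    have hsum : (l * ∫ h : ℝ × ℝ, F a b h) + m * ∫ h : ℝ × ℝ, F a' b' h
        = ∫ h : ℝ × ℝ, (l * F a b h + m * F a' b' h) := by
      rw [integral_add ((hInt a b).const_mul l) ((hInt a' b').const_mul m)]
      simp only [← smul_eq_mul, integral_smul]
    rw [hsum]
    refine integral_mono (hInt _ _)
      (((hInt a b).const_mul l).add ((hInt a' b').const_mul m)) fun h => ?_
    have key : max (l * a + m * a' + h.1) (l * b + m * b' + h.2)
        ≤ l * max (a + h.1) (b + h.2) + m * max (a' + h.1) (b' + h.2) := by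
      have h1 := le_max_left (a + h.1) (b + h.2)
      have h2 := le_max_right (a + h.1) (b + h.2)
      have h3 := le_max_left (a' + h.1) (b' + h.2)
      have h4 := le_max_right (a' + h.1) (b' + h.2)
      have c1 := mul_le_mul_of_nonneg_left h1 hl
      have c2 := mul_le_mul_of_nonneg_left h2 hl
      have c3 := mul_le_mul_of_nonneg_left h3 hm
      have c4 := mul_le_mul_of_nonneg_left h4 hm
      rw [mul_add] at c1 c2 c3 c4
      have e1 : l * h.1 + m * h.1 = h.1 := by linear_combination h.1 * hlm
      have e2 : l * h.2 + m * h.2 = h.2 := by linear_combination h.2 * hlm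
      apply max_le <;> linarith
    have hmul := mul_le_mul_of_nonneg_right key (hw0 h)
    calc F (l * a + m * a') (l * b + m * b') h
        = max (l * a + m * a' + h.1) (l * b + m * b' + h.2) * w h := rfl
      _ ≤ (l * max (a + h.1) (b + h.2) + m * max (a' + h.1) (b' + h.2)) * w h := hmul
      _ = l * F a b h + m * F a' b' h := by simp only [hF]; ring
  refine ⟨hSc, fun x hx y hy a b ha hb hab => ?_⟩
  have e1 := hu₁.2 hx hy ha hb hab
  have e2 := hu₂.2 hx hy ha hb hab
  simp only [smul_eq_mul] at e1 e2 ⊢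
  calc maxη (u₁ (a • x + b • y)) (u₂ (a • x + b • y))
      ≤ maxη (a * u₁ x + b * u₁ y) (a * u₂ x + b * u₂ y) := hmono _ _ _ _ e1 e2
    _ ≤ a * maxη (u₁ x) (u₂ x) + b * maxη (u₁ y) (u₂ y) := hcvx _ _ _ _ _ _ ha hb hab
end

section
/- Let U₀ ⊆ ℝⁿ be a convex domain and D ⊆ U₀ × ℝ^m a convex open set with bounded fibers D_t = {x : (t,x) ∈ D}, all nonempty. Let φ be a convex function on D. Then the function φ̃ defined by e^{-φ̃(t)} = ∫_{D_t} e^{-φ(t,x)} dλ(x) is convex on U₀ (Prékopa's theorem for families). -/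
open MeasureTheory Bornology Set Pointwise
open scoped ENNReal NNReal
lemma bm_compact {K L : Set ℝ} (hK : IsCompact K) (hL : IsCompact L)
    (hKne : K.Nonempty) (hLne : L.Nonempty) :
    volume K + volume L ≤ volume (K + L) := by
  set a₀ := sSup K with ha₀
  set b₀ := sInf L with hb₀
  have ha₀K : a₀ ∈ K := hK.sSup_mem hKne
  have hb₀L : b₀ ∈ L := hL.sInf_mem hLne
  set S : Set ℝ := b₀ +ᵥ K with hS
  set T : Set ℝ := a₀ +ᵥ L with hT
  have hvS : volume S = volume K := measure_vadd _ _ _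
  have hvT : volume T = volume L := measure_vadd _ _ _
  have hST : S ∪ T ⊆ K + L := by
    rintro z (⟨x, hx, rfl⟩ | ⟨y, hy, rfl⟩)
    · exact ⟨x, hx, b₀, hb₀L, by simp [vadd_eq_add]; ring⟩
    · exact ⟨a₀, ha₀K, y, hy, rfl⟩
  have hTm : MeasurableSet T := by
    rw [hT, ← Set.image_vadd]
    exact (hL.image (continuous_const_vadd a₀)).measurableSet
  have hdisj : Disjoint (S \ {a₀ + b₀}) T := by
    rw [Set.disjoint_left]
    rintro z ⟨⟨x, hx, rfl⟩, hz1⟩ ⟨y, hy, hz2⟩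
    simp only [vadd_eq_add] at hz1 hz2 ⊢
    have h1 : x ≤ a₀ := le_csSup hK.bddAbove hx
    have h2 : b₀ ≤ y := csInf_le hL.bddBelow hy
    simp only [Set.mem_singleton_iff] at hz1
    apply hz1
    have : a₀ + y = b₀ + x := hz2
    linarith
  calc volume K + volume L = volume (S \ {a₀ + b₀}) + volume T := by
        rw [hvT, measure_diff_null (measure_singleton _), hvS]
    _ = volume ((S \ {a₀ + b₀}) ∪ T) := (measure_union hdisj hTm).symm
    _ ≤ volume (K + L) := measure_mono ((Set.union_subset_union_left _ diff_subset).trans hST)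

lemma bm_meas {A B : Set ℝ} (hA : MeasurableSet A) (hB : MeasurableSet B)
    (hAne : A.Nonempty) (hBne : B.Nonempty) :
    volume A + volume B ≤ volume (A + B) := by
  rcases hAne with ⟨a, ha⟩
  rcases hBne with ⟨b, hb⟩
  have hvA : volume A ≤ volume (A + B) := by
    calc volume A = volume (b +ᵥ A) := (measure_vadd _ _ _).symm
    _ ≤ volume (A + B) := measure_mono (by
        rintro z ⟨x, hx, rfl⟩
        exact ⟨x, hx, b, hb, by simp [vadd_eq_add]; ring⟩)
  have hvB : volume B ≤ volume (A + B) := by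
    calc volume B = volume (a +ᵥ B) := (measure_vadd _ _ _).symm
    _ ≤ volume (A + B) := measure_mono (by
        rintro z ⟨y, hy, rfl⟩
        exact ⟨a, ha, y, hy, rfl⟩)
  rcases eq_or_ne (volume (A + B)) ⊤ with htop | htop
  · simp [htop]
  have hAtop : volume A ≠ ⊤ := fun h => htop (top_le_iff.1 (h ▸ hvA))
  have hBtop : volume B ≠ ⊤ := fun h => htop (top_le_iff.1 (h ▸ hvB))
  refine ENNReal.le_of_forall_pos_le_add fun ε hε _ => ?_
  have hε2 : ((ε : ℝ≥0∞) / 2) ≠ 0 := by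
    simp [ENNReal.div_eq_top, hε.ne']
  obtain ⟨K, hKA, hKc, hKv⟩ := hA.exists_isCompact_lt_add hAtop hε2
  obtain ⟨L, hLB, hLc, hLv⟩ := hB.exists_isCompact_lt_add hBtop hε2
  have hKc' : IsCompact (K ∪ {a}) := hKc.union isCompact_singleton
  have hLc' : IsCompact (L ∪ {b}) := hLc.union isCompact_singleton
  have key := bm_compact hKc' hLc' ⟨a, Or.inr rfl⟩ ⟨b, Or.inr rfl⟩
  have hsub : (K ∪ {a}) + (L ∪ {b}) ⊆ A + B := by
    apply Set.add_subset_add <;> rw [Set.union_subset_iff] <;>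
      simp [hKA, hLB, Set.singleton_subset_iff, ha, hb]
  calc volume A + volume B ≤ (volume K + ε/2) + (volume L + ε/2) :=
        add_le_add hKv.le hLv.le
    _ = volume K + volume L + ε := by rw [add_add_add_comm, ENNReal.add_halves]
    _ ≤ volume (K ∪ {a}) + volume (L ∪ {b}) + ε := by
        gcongr <;> exact Set.subset_union_left
    _ ≤ volume ((K ∪ {a}) + (L ∪ {b})) + ε := by gcongr
    _ ≤ volume (A + B) + ε := by gcongr

lemma bm_scaled {A B : Set ℝ} (hA : MeasurableSet A) (hB : MeasurableSet B)
    (hAne : A.Nonempty) (hBne : B.Nonempty) {a b : ℝ} (ha : 0 < a) (hb : 0 < b) :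
    ENNReal.ofReal a * volume A + ENNReal.ofReal b * volume B ≤ volume (a • A + b • B) := by
  have h1 : volume (a • A) = ENNReal.ofReal a * volume A := by
    rw [Measure.addHaar_smul_of_nonneg volume ha.le A]; simp
  have h2 : volume (b • B) = ENNReal.ofReal b * volume B := by
    rw [Measure.addHaar_smul_of_nonneg volume hb.le B]; simp
  rw [← h1, ← h2]
  exact bm_meas (hA.const_smul_of_ne_zero ha.ne' : MeasurableSet (a • A))
    (hB.const_smul_of_ne_zero hb.ne' : MeasurableSet (b • B)) hAne.smul_set hBne.smul_set

lemma ennreal_amgm {a b : ℝ} (ha : 0 < a) (hb : 0 < b) (hab : a + b = 1)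
    (x y : ℝ≥0∞) : x ^ a * y ^ b ≤ ENNReal.ofReal a * x + ENNReal.ofReal b * y := by
  rcases eq_or_ne x 0 with rfl | hx0
  · rw [ENNReal.zero_rpow_of_pos ha, zero_mul]; exact zero_le
  rcases eq_or_ne y 0 with rfl | hy0
  · rw [ENNReal.zero_rpow_of_pos hb, mul_zero]; exact zero_le
  rcases eq_or_ne x ⊤ with rfl | hxt
  · have : ENNReal.ofReal a * ⊤ + ENNReal.ofReal b * y = ⊤ := by
      rw [ENNReal.mul_top (by simp [ENNReal.ofReal_eq_zero, not_le, ha]), top_add]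
    rw [this]; exact le_top
  rcases eq_or_ne y ⊤ with rfl | hyt
  · have : ENNReal.ofReal a * x + ENNReal.ofReal b * ⊤ = ⊤ := by
      rw [ENNReal.mul_top (by simp [ENNReal.ofReal_eq_zero, not_le, hb]), add_top]
    rw [this]; exact le_top
  lift x to ℝ≥0 using hxt
  lift y to ℝ≥0 using hyt
  have hw : a.toNNReal + b.toNNReal = 1 := by
    rw [← Real.toNNReal_add ha.le hb.le, hab, Real.toNNReal_one]
  have key := NNReal.geom_mean_le_arith_mean2_weighted a.toNNReal b.toNNReal x y hw
  have ha' : ((a.toNNReal : ℝ)) = a := Real.coe_toNNReal a ha.le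
  have hb' : ((b.toNNReal : ℝ)) = b := Real.coe_toNNReal b hb.le
  rw [ha', hb'] at key
  have e1 : ENNReal.ofReal a = (a.toNNReal : ℝ≥0∞) := rfl
  have e2 : ENNReal.ofReal b = (b.toNNReal : ℝ≥0∞) := rfl
  rw [e1, e2, ← ENNReal.coe_rpow_of_nonneg x ha.le, ← ENNReal.coe_rpow_of_nonneg y hb.le,
    ← ENNReal.coe_mul, ← ENNReal.coe_mul, ← ENNReal.coe_mul, ← ENNReal.coe_add,
    ENNReal.coe_le_coe]
  exact key

lemma layer_aux {f : ℝ → ℝ≥0∞} (hf : Measurable f) (hf1 : ∀ x, f x ≤ 1)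
    (hα0 : (⨆ x, f x) ≠ 0) :
    ∫⁻ t in Ioo (0:ℝ) 1, volume {x | t * (⨆ x, f x).toReal ≤ (f x).toReal} =
      (⨆ x, f x)⁻¹ * ∫⁻ x, f x := by
  set α := ⨆ x, f x with hα
  have hα1 : α ≤ 1 := iSup_le hf1
  have hαt : α ≠ ⊤ := (hα1.trans_lt ENNReal.one_lt_top).ne
  have hft : ∀ x, f x ≠ ⊤ := fun x => ((hf1 x).trans_lt ENNReal.one_lt_top).ne
  set αR := α.toReal with hαR
  have hαR0 : 0 < αR := ENNReal.toReal_pos hα0 hαt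
  set F := fun x => (f x).toReal with hFdef
  have hfF : ∀ x, f x = ENNReal.ofReal (F x) := fun x => (ENNReal.ofReal_toReal (hft x)).symm
  have hFub : ∀ x, F x ≤ αR := fun x => ENNReal.toReal_mono hαt (le_iSup f x)
  set A : ℝ → Set ℝ := fun t => {x | t * αR ≤ F x} with hA
  show ∫⁻ t in Ioo (0:ℝ) 1, volume (A t) = α⁻¹ * ∫⁻ x, f x
  have e1 : ∀ x, ENNReal.ofReal (F x / αR) = α⁻¹ * f x := by
    intro x
    rw [ENNReal.ofReal_div_of_pos hαR0, ← hfF x, ENNReal.ofReal_toReal hαt,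
      div_eq_mul_inv, mul_comm]
  have e2 : ∫⁻ x, ENNReal.ofReal (F x / αR) = α⁻¹ * ∫⁻ x, f x := by
    simp_rw [e1]
    exact lintegral_const_mul' _ _ (ENNReal.inv_ne_top.2 hα0)
  have e3 : ∫⁻ x, ENNReal.ofReal (F x / αR) =
      ∫⁻ t in Ioi (0:ℝ), volume {x | t ≤ F x / αR} :=
    lintegral_eq_lintegral_meas_le volume
      (Filter.Eventually.of_forall fun x => div_nonneg ENNReal.toReal_nonneg hαR0.le)
      ((hf.ennreal_toReal.div_const _).aemeasurable)
  have e4 : ∀ t : ℝ, {x | t ≤ F x / αR} = A t := by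
    intro t; ext x; simp [hA, le_div_iff₀ hαR0]
  have e5 : Ioi (0:ℝ) = Ioo (0:ℝ) 1 ∪ Ici (1:ℝ) := by
    ext x
    simp only [mem_Ioi, mem_union, mem_Ioo, mem_Ici]
    constructor
    · intro hx; rcases lt_or_ge x 1 with h1 | h1
      · exact Or.inl ⟨hx, h1⟩
      · exact Or.inr h1
    · rintro (⟨hx, _⟩ | hx) <;> linarith
  have e6 : ∫⁻ t in Ici (1:ℝ), volume (A t) = 0 := by
    rw [setLIntegral_congr (Ioi_ae_eq_Ici (a := (1:ℝ))).symm]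
    rw [setLIntegral_congr_fun measurableSet_Ioi
      (fun t (ht : t ∈ Ioi (1:ℝ)) => ?_), lintegral_zero]
    have : A t = ∅ := by
      ext x
      simp only [hA, mem_setOf_eq, mem_empty_iff_false, iff_false, not_le]
      calc F x ≤ αR := hFub x
        _ < t * αR := by nlinarith [mem_Ioi.1 ht]
    rw [this]; exact measure_empty
  rw [← e2, e3]
  simp_rw [e4]
  rw [e5, lintegral_union measurableSet_Ici (by
    rw [Set.disjoint_left]; rintro x ⟨_, h1⟩ h2; exact absurd h2 (not_le.2 h1)), e6, add_zero]

lemma pl1_core {a b : ℝ} (ha : 0 < a) (hb : 0 < b) (hab : a + b = 1)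
    {f g h : ℝ → ℝ≥0∞} (hf : Measurable f) (hg : Measurable g) (hh : Measurable h)
    (hf1 : ∀ x, f x ≤ 1) (hg1 : ∀ x, g x ≤ 1) (hh1 : ∀ x, h x ≤ 1)
    (hyp : ∀ x y, f x ^ a * g y ^ b ≤ h (a * x + b * y)) :
    (∫⁻ x, f x) ^ a * (∫⁻ x, g x) ^ b ≤ ∫⁻ x, h x := by
  rcases eq_or_ne (∫⁻ x, f x) 0 with h0 | hF0
  · rw [h0, ENNReal.zero_rpow_of_pos ha, zero_mul]; exact zero_le
  rcases eq_or_ne (∫⁻ x, g x) 0 with h0 | hG0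
  · rw [h0, ENNReal.zero_rpow_of_pos hb, mul_zero]; exact zero_le
  set α := ⨆ x, f x with hα
  set β := ⨆ x, g x with hβ
  have hα0 : α ≠ 0 := by
    intro hc
    apply hF0
    have : ∀ x, f x = 0 := fun x => le_antisymm (hc ▸ le_iSup f x) zero_le
    simp [funext this]
  have hβ0 : β ≠ 0 := by
    intro hc
    apply hG0
    have : ∀ x, g x = 0 := fun x => le_antisymm (hc ▸ le_iSup g x) zero_le
    simp [funext this]
  have hα1 : α ≤ 1 := iSup_le hf1
  have hβ1 : β ≤ 1 := iSup_le hg1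
  have hαt : α ≠ ⊤ := (hα1.trans_lt ENNReal.one_lt_top).ne
  have hβt : β ≠ ⊤ := (hβ1.trans_lt ENNReal.one_lt_top).ne
  have hft : ∀ x, f x ≠ ⊤ := fun x => ((hf1 x).trans_lt ENNReal.one_lt_top).ne
  have hgt : ∀ x, g x ≠ ⊤ := fun x => ((hg1 x).trans_lt ENNReal.one_lt_top).ne
  have hht : ∀ x, h x ≠ ⊤ := fun x => ((hh1 x).trans_lt ENNReal.one_lt_top).ne
  set αR := α.toReal with hαR
  set βR := β.toReal with hβR
  have hαR0 : 0 < αR := ENNReal.toReal_pos hα0 hαt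
  have hβR0 : 0 < βR := ENNReal.toReal_pos hβ0 hβt
  set γ := α ^ a * β ^ b with hγ
  have hγ0 : γ ≠ 0 := by
    have : 0 < γ := ENNReal.mul_pos (ENNReal.rpow_pos (pos_iff_ne_zero.2 hα0) hαt).ne'
      (ENNReal.rpow_pos (pos_iff_ne_zero.2 hβ0) hβt).ne'
    exact this.ne'
  have hγt : γ ≠ ⊤ := by
    apply (mul_le_one' (ENNReal.rpow_le_one hα1 ha.le)
      (ENNReal.rpow_le_one hβ1 hb.le)).trans_lt ENNReal.one_lt_top |>.ne
  set γR := γ.toReal with hγR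
  have hγR0 : 0 < γR := ENNReal.toReal_pos hγ0 hγt
  have hγRval : γR = αR ^ a * βR ^ b := by
    rw [hγR, hγ, ENNReal.toReal_mul, ← ENNReal.toReal_rpow, ← ENNReal.toReal_rpow]
  set F := fun x => (f x).toReal with hFdef
  set G := fun x => (g x).toReal with hGdef
  set H := fun x => (h x).toReal with hHdef
  have hfF : ∀ x, f x = ENNReal.ofReal (F x) := fun x => (ENNReal.ofReal_toReal (hft x)).symm
  have hgG : ∀ x, g x = ENNReal.ofReal (G x) := fun x => (ENNReal.ofReal_toReal (hgt x)).symm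
  have hhH : ∀ x, h x = ENNReal.ofReal (H x) := fun x => (ENNReal.ofReal_toReal (hht x)).symm
  have hFub : ∀ x, F x ≤ αR := fun x => ENNReal.toReal_mono hαt (le_iSup f x)
  have hGub : ∀ x, G x ≤ βR := fun x => ENNReal.toReal_mono hβt (le_iSup g x)
  set A : ℝ → Set ℝ := fun t => {x | t * αR ≤ F x} with hA
  set B : ℝ → Set ℝ := fun t => {x | t * βR ≤ G x} with hB
  -- the A-side layer cake identity
  have layerA := layer_aux hf hf1 (hα ▸ hα0)
  have layerB := layer_aux hg hg1 (hβ ▸ hβ0)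
  set C : ℝ → Set ℝ := fun t => {z | t ≤ H z / γR} with hC
  have hvolA_anti : Antitone fun t => volume (A t) := by
    intro s t hst
    apply measure_mono
    intro x hx
    simp only [hA, mem_setOf_eq] at hx ⊢
    nlinarith [hαR0]
  have hvolB_anti : Antitone fun t => volume (B t) := by
    intro s t hst
    apply measure_mono
    intro x hx
    simp only [hB, mem_setOf_eq] at hx ⊢
    nlinarith [hβR0]
  have hvolC_anti : Antitone fun t => volume (C t) := by
    intro s t hst
    exact measure_mono (fun z hz => le_trans hst hz)
  have key : ∀ t ∈ Ioo (0:ℝ) 1,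
      ENNReal.ofReal a * volume (A t) + ENNReal.ofReal b * volume (B t) ≤
        volume (C t) := by
    rintro t ⟨ht0, ht1⟩
    have hAne : (A t).Nonempty := by
      have hlt : ENNReal.ofReal (t * αR) < α := by
        rw [ENNReal.ofReal_mul ht0.le, ENNReal.ofReal_toReal hαt]
        calc ENNReal.ofReal t * α < 1 * α := by
              refine (mul_comm _ α).trans_lt ((ENNReal.mul_lt_mul_right hα0 hαt ?_).trans_eq (mul_comm α 1))
              exact ENNReal.ofReal_lt_one.2 ht1
          _ = α := one_mul α
      rw [hα] at hlt
      obtain ⟨x, hx⟩ := lt_iSup_iff.1 hlt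
      refine ⟨x, ?_⟩
      have h2 := ENNReal.toReal_mono (hft x) hx.le
      rwa [ENNReal.toReal_ofReal (by positivity)] at h2
    have hBne : (B t).Nonempty := by
      have hlt : ENNReal.ofReal (t * βR) < β := by
        rw [ENNReal.ofReal_mul ht0.le, ENNReal.ofReal_toReal hβt]
        calc ENNReal.ofReal t * β < 1 * β := by
              refine (mul_comm _ β).trans_lt ((ENNReal.mul_lt_mul_right hβ0 hβt ?_).trans_eq (mul_comm β 1))
              exact ENNReal.ofReal_lt_one.2 ht1
          _ = β := one_mul β
      rw [hβ] at hlt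
      obtain ⟨y, hy⟩ := lt_iSup_iff.1 hlt
      refine ⟨y, ?_⟩
      have h2 := ENNReal.toReal_mono (hgt y) hy.le
      rwa [ENNReal.toReal_ofReal (by positivity)] at h2
    have hAm : MeasurableSet (A t) := measurableSet_le measurable_const hf.ennreal_toReal
    have hBm : MeasurableSet (B t) := measurableSet_le measurable_const hg.ennreal_toReal
    have incl : a • A t + b • B t ⊆ C t := by
      rintro z ⟨u, hu, v, hv, rfl⟩
      obtain ⟨x, hx, rfl⟩ := hu
      obtain ⟨y, hy, rfl⟩ := hv
      have h1 : ENNReal.ofReal (t * αR) ≤ f x := by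
        rw [hfF x]; exact ENNReal.ofReal_le_ofReal hx
      have h2 : ENNReal.ofReal (t * βR) ≤ g y := by
        rw [hgG y]; exact ENNReal.ofReal_le_ofReal hy
      have h3 : ENNReal.ofReal (t * γR) ≤ h (a * x + b * y) := by
        refine le_trans ?_ (hyp x y)
        calc ENNReal.ofReal (t * γR)
            = ENNReal.ofReal ((t * αR) ^ a * (t * βR) ^ b) := by
              congr 1
              rw [hγRval, Real.mul_rpow ht0.le hαR0.le, Real.mul_rpow ht0.le hβR0.le]
              rw [show t ^ a * αR ^ a * (t ^ b * βR ^ b)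
                  = (t ^ a * t ^ b) * (αR ^ a * βR ^ b) from by ring]
              rw [← Real.rpow_add ht0, hab, Real.rpow_one]
          _ = ENNReal.ofReal ((t * αR) ^ a) * ENNReal.ofReal ((t * βR) ^ b) :=
              ENNReal.ofReal_mul (by positivity)
          _ = ENNReal.ofReal (t * αR) ^ a * ENNReal.ofReal (t * βR) ^ b := by
              rw [ENNReal.ofReal_rpow_of_nonneg (by positivity) ha.le,
                ENNReal.ofReal_rpow_of_nonneg (by positivity) hb.le]
          _ ≤ f x ^ a * g y ^ b :=
              mul_le_mul' (ENNReal.rpow_le_rpow h1 ha.le) (ENNReal.rpow_le_rpow h2 hb.le)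
      show t ≤ H (a • x + b • y) / γR
      rw [smul_eq_mul, smul_eq_mul, le_div_iff₀ hγR0]
      have h4 := ENNReal.toReal_mono (hht _) h3
      rwa [ENNReal.toReal_ofReal (by positivity)] at h4
    calc ENNReal.ofReal a * volume (A t) + ENNReal.ofReal b * volume (B t)
        ≤ volume (a • A t + b • B t) := bm_scaled hAm hBm hAne hBne ha hb
      _ ≤ volume (C t) := measure_mono incl
  have hcake : γ * ∫⁻ t in Ioo (0:ℝ) 1, volume (C t) ≤ ∫⁻ z, h z := by
    have e1 : ∀ z, h z = γ * ENNReal.ofReal (H z / γR) := by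
      intro z
      rw [ENNReal.ofReal_div_of_pos hγR0, ENNReal.ofReal_toReal hγt, ← hhH z,
        ENNReal.mul_div_cancel hγ0 hγt]
    calc γ * ∫⁻ t in Ioo (0:ℝ) 1, volume (C t)
        ≤ γ * ∫⁻ t in Ioi (0:ℝ), volume (C t) := by
          gcongr
          exact Ioo_subset_Ioi_self
      _ = γ * ∫⁻ z, ENNReal.ofReal (H z / γR) := by
          rw [lintegral_eq_lintegral_meas_le volume
            (Filter.Eventually.of_forall fun z => div_nonneg ENNReal.toReal_nonneg hγR0.le)
            ((hh.ennreal_toReal.div_const _).aemeasurable)]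
      _ = ∫⁻ z, h z := by
          rw [← lintegral_const_mul' _ _ hγt]
          exact lintegral_congr fun z => (e1 z).symm
  have amgm := ennreal_amgm ha hb hab (α⁻¹ * ∫⁻ x, f x) (β⁻¹ * ∫⁻ x, g x)
  calc (∫⁻ x, f x) ^ a * (∫⁻ x, g x) ^ b
      = γ * ((α⁻¹ * ∫⁻ x, f x) ^ a * (β⁻¹ * ∫⁻ x, g x) ^ b) := by
        rw [ENNReal.mul_rpow_of_nonneg _ _ ha.le, ENNReal.mul_rpow_of_nonneg _ _ hb.le, hγ]
        have c1 : α ^ a * (α⁻¹) ^ a = 1 := by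
          rw [← ENNReal.mul_rpow_of_nonneg _ _ ha.le, ENNReal.mul_inv_cancel hα0 hαt,
            ENNReal.one_rpow]
        have c2 : β ^ b * (β⁻¹) ^ b = 1 := by
          rw [← ENNReal.mul_rpow_of_nonneg _ _ hb.le, ENNReal.mul_inv_cancel hβ0 hβt,
            ENNReal.one_rpow]
        rw [show α ^ a * β ^ b * (α⁻¹ ^ a * (∫⁻ x, f x) ^ a * (β⁻¹ ^ b * (∫⁻ x, g x) ^ b))
            = (α ^ a * α⁻¹ ^ a) * (β ^ b * β⁻¹ ^ b) * ((∫⁻ x, f x) ^ a * (∫⁻ x, g x) ^ b)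
            from by ring, c1, c2, one_mul, one_mul]
    _ ≤ γ * (ENNReal.ofReal a * (α⁻¹ * ∫⁻ x, f x) + ENNReal.ofReal b * (β⁻¹ * ∫⁻ x, g x)) :=
        mul_le_mul_right amgm γ
    _ = γ * ∫⁻ t in Ioo (0:ℝ) 1,
          (ENNReal.ofReal a * volume (A t) + ENNReal.ofReal b * volume (B t)) := by
        rw [lintegral_add_left (hvolA_anti.measurable.const_mul _),
          lintegral_const_mul' _ _ ENNReal.ofReal_ne_top,
          lintegral_const_mul' _ _ ENNReal.ofReal_ne_top, layerA, layerB]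
    _ ≤ γ * ∫⁻ t in Ioo (0:ℝ) 1, volume (C t) := by
        refine mul_le_mul_right (setLIntegral_mono hvolC_anti.measurable key) γ
    _ ≤ ∫⁻ z, h z := hcake

lemma isup_mono_mul {u v : ℕ → ℝ≥0∞} (hu : Monotone u) (hv : Monotone v) :
    (⨆ n, u n) * (⨆ n, v n) = ⨆ n, u n * v n := by
  apply le_antisymm
  · rw [ENNReal.iSup_mul]
    refine iSup_le fun n => ?_
    rw [ENNReal.mul_iSup]
    refine iSup_le fun m => ?_
    exact le_iSup_of_le (max n m) (mul_le_mul' (hu (le_max_left n m)) (hv (le_max_right n m)))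
  · exact iSup_le fun n => mul_le_mul' (le_iSup u n) (le_iSup v n)

lemma isup_rpow {u : ℕ → ℝ≥0∞} {c : ℝ} (hc : 0 < c) :
    (⨆ n, u n) ^ c = ⨆ n, u n ^ c := by
  apply le_antisymm
  · have h1 : ⨆ n, u n ≤ (⨆ n, u n ^ c) ^ c⁻¹ := by
      refine iSup_le fun n => ?_
      rw [← ENNReal.rpow_rpow_inv hc.ne' (u n)]
      exact ENNReal.rpow_le_rpow (le_iSup (fun n => u n ^ c) n) (by positivity)
    calc (⨆ n, u n) ^ c ≤ ((⨆ n, u n ^ c) ^ c⁻¹) ^ c := ENNReal.rpow_le_rpow h1 hc.le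
      _ = ⨆ n, u n ^ c := ENNReal.rpow_inv_rpow hc.ne' _
  · exact iSup_le fun n => ENNReal.rpow_le_rpow (le_iSup u n) hc.le

lemma pl_dim1 {a b : ℝ} (ha : 0 < a) (hb : 0 < b) (hab : a + b = 1)
    {f g h : ℝ → ℝ≥0∞} (hf : Measurable f) (hg : Measurable g) (hh : Measurable h)
    (hyp : ∀ x y, f x ^ a * g y ^ b ≤ h (a * x + b * y)) :
    (∫⁻ x, f x) ^ a * (∫⁻ x, g x) ^ b ≤ ∫⁻ x, h x := by
  set N : ℕ → ℝ≥0∞ := fun n => (n : ℝ≥0∞) + 1 with hN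
  have hN0 : ∀ n, N n ≠ 0 := fun n => by simp [hN]
  have hNt : ∀ n, N n ≠ ⊤ := fun n => by simp [hN]
  have core : ∀ n : ℕ, (∫⁻ x, min (f x) (N n)) ^ a * (∫⁻ x, min (g x) (N n)) ^ b
      ≤ ∫⁻ x, h x := by
    intro n
    set c := N n with hc
    have hinv0 : c⁻¹ ≠ 0 := ENNReal.inv_ne_zero.2 (hNt n)
    have hinvt : c⁻¹ ≠ ⊤ := ENNReal.inv_ne_top.2 (hN0 n)
    have hcc : c / c = 1 := ENNReal.div_self (hN0 n) (hNt n)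
    have hinva : c⁻¹ ^ a * c⁻¹ ^ b = c⁻¹ := by
      rw [← ENNReal.rpow_add _ _ hinv0 hinvt, hab, ENNReal.rpow_one]
    have key := pl1_core ha hb hab
      (f := fun x => min (f x) c / c) (g := fun x => min (g x) c / c)
      (h := fun x => min (h x / c) 1)
      ((hf.min measurable_const).div_const c) ((hg.min measurable_const).div_const c)
      ((hh.div_const c).min measurable_const)
      (fun x => by
        show min (f x) c / c ≤ 1
        rw [div_eq_mul_inv]
        calc min (f x) c * c⁻¹ ≤ c * c⁻¹ := mul_le_mul_left (min_le_right _ _) _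
          _ = 1 := by rw [← div_eq_mul_inv]; exact hcc)
      (fun x => by
        show min (g x) c / c ≤ 1
        rw [div_eq_mul_inv]
        calc min (g x) c * c⁻¹ ≤ c * c⁻¹ := mul_le_mul_left (min_le_right _ _) _
          _ = 1 := by rw [← div_eq_mul_inv]; exact hcc)
      (fun x => min_le_right _ _)
      (fun x y => by
        refine le_min ?_ ?_
        · calc (min (f x) c / c) ^ a * (min (g y) c / c) ^ b
              ≤ (f x / c) ^ a * (g y / c) ^ b := by
                gcongr <;> [exact min_le_left _ _; exact min_le_left _ _]
            _ = (f x ^ a * g y ^ b) * c⁻¹ := by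
                rw [div_eq_mul_inv, div_eq_mul_inv, ENNReal.mul_rpow_of_nonneg _ _ ha.le,
                  ENNReal.mul_rpow_of_nonneg _ _ hb.le]
                calc f x ^ a * c⁻¹ ^ a * (g y ^ b * c⁻¹ ^ b)
                    = f x ^ a * g y ^ b * (c⁻¹ ^ a * c⁻¹ ^ b) := by ring
                  _ = f x ^ a * g y ^ b * c⁻¹ := by rw [hinva]
            _ ≤ h (a * x + b * y) * c⁻¹ := mul_le_mul_left (hyp x y) _
            _ = h (a * x + b * y) / c := (div_eq_mul_inv _ _).symm
        · calc (min (f x) c / c) ^ a * (min (g y) c / c) ^ b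
              ≤ 1 ^ a * 1 ^ b := by
                gcongr
                · rw [div_eq_mul_inv]
                  calc min (f x) c * c⁻¹ ≤ c * c⁻¹ := mul_le_mul_left (min_le_right _ _) _
                    _ = 1 := by rw [← div_eq_mul_inv]; exact hcc
                · rw [div_eq_mul_inv]
                  calc min (g y) c * c⁻¹ ≤ c * c⁻¹ := mul_le_mul_left (min_le_right _ _) _
                    _ = 1 := by rw [← div_eq_mul_inv]; exact hcc
            _ = 1 := by rw [ENNReal.one_rpow, ENNReal.one_rpow, one_mul])
    -- rewrite the integrals
    have e1 : ∫⁻ x, min (f x) c / c = c⁻¹ * ∫⁻ x, min (f x) c := by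
      simp_rw [div_eq_mul_inv, mul_comm]
      exact lintegral_const_mul' _ _ hinvt
    have e2 : ∫⁻ x, min (g x) c / c = c⁻¹ * ∫⁻ x, min (g x) c := by
      simp_rw [div_eq_mul_inv, mul_comm]
      exact lintegral_const_mul' _ _ hinvt
    have e3 : ∫⁻ x, min (h x / c) 1 ≤ c⁻¹ * ∫⁻ x, h x := by
      rw [← lintegral_const_mul' _ _ hinvt]
      exact lintegral_mono fun x => (min_le_left _ _).trans_eq
        (by rw [div_eq_mul_inv, mul_comm])
    rw [e1, e2] at key
    replace key := key.trans e3
    rw [ENNReal.mul_rpow_of_nonneg _ _ ha.le, ENNReal.mul_rpow_of_nonneg _ _ hb.le] at key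
    have e4 : c⁻¹ ^ a * (∫⁻ x, min (f x) c) ^ a * (c⁻¹ ^ b * (∫⁻ x, min (g x) c) ^ b)
        = c⁻¹ * ((∫⁻ x, min (f x) c) ^ a * (∫⁻ x, min (g x) c) ^ b) := by
      calc c⁻¹ ^ a * (∫⁻ x, min (f x) c) ^ a * (c⁻¹ ^ b * (∫⁻ x, min (g x) c) ^ b)
          = (c⁻¹ ^ a * c⁻¹ ^ b) * ((∫⁻ x, min (f x) c) ^ a * (∫⁻ x, min (g x) c) ^ b) := by
            ring
        _ = _ := by rw [hinva]
    rw [e4] at key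
    exact (ENNReal.mul_le_mul_iff_right hinv0 hinvt).1 key
  -- monotone convergence
  have hNmono : ∀ i j : ℕ, i ≤ j → N i ≤ N j := by
    intro i j hij
    simp only [hN]
    exact add_le_add_left (by exact_mod_cast hij) 1
  have mc : ∀ (u : ℝ → ℝ≥0∞), Measurable u → ∫⁻ x, u x = ⨆ n, ∫⁻ x, min (u x) (N n) := by
    intro u hu
    rw [← lintegral_iSup (fun n => hu.min measurable_const)
      (fun i j hij x => min_le_min le_rfl (hNmono i j hij))]
    refine lintegral_congr fun x => ?_
    refine le_antisymm ?_ (iSup_le fun n => min_le_left _ _)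
    rcases eq_or_ne (u x) ⊤ with ht | ht
    · rw [ht]
      calc (⊤:ℝ≥0∞) = ⨆ n : ℕ, (n : ℝ≥0∞) := ENNReal.iSup_natCast.symm
        _ ≤ ⨆ n, min ⊤ (N n) := iSup_mono fun n => by
            simp only [hN, min_eq_right (le_top : N n ≤ ⊤), top_inf_eq]
            exact le_self_add
    · obtain ⟨n, hn⟩ := ENNReal.exists_nat_gt ht
      refine le_trans (le_of_eq ?_) (le_iSup _ n)
      rw [min_eq_left]
      simp only [hN]
      exact hn.le.trans (le_add_right le_rfl)
  have monA : Monotone fun n => (∫⁻ x, min (f x) (N n)) ^ a := fun i j hij =>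
    ENNReal.rpow_le_rpow (lintegral_mono fun x => min_le_min le_rfl (hNmono i j hij)) ha.le
  have monB : Monotone fun n => (∫⁻ x, min (g x) (N n)) ^ b := fun i j hij =>
    ENNReal.rpow_le_rpow (lintegral_mono fun x => min_le_min le_rfl (hNmono i j hij)) hb.le
  rw [mc f hf, mc g hg, isup_rpow ha, isup_rpow hb, isup_mono_mul monA monB]
  exact iSup_le core

lemma pl_dim {a b : ℝ} (ha : 0 < a) (hb : 0 < b) (hab : a + b = 1) :
    ∀ (m : ℕ) (f g h : (Fin m → ℝ) → ℝ≥0∞), Measurable f → Measurable g → Measurable h →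
    (∀ x y, f x ^ a * g y ^ b ≤ h (a • x + b • y)) →
    (∫⁻ x, f x) ^ a * (∫⁻ x, g x) ^ b ≤ ∫⁻ x, h x := by
  intro m
  induction m with
  | zero =>
    intro f g h hf hg hh hyp
    have e : ∀ (u : (Fin 0 → ℝ) → ℝ≥0∞), ∫⁻ x, u x = u default := by
      intro u
      rw [lintegral_unique, MeasureTheory.volume_pi, Measure.pi_univ]
      simp
      exact congrArg u (Subsingleton.elim _ _)
    rw [e f, e g, e h]
    have := hyp default default
    rwa [Subsingleton.elim (a • (default : Fin 0 → ℝ) + b • default) default] at this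
  | succ m ih =>
    intro f g h hf hg hh hyp
    set e := MeasurableEquiv.piFinSuccAbove (fun _ : Fin (m+1) => ℝ) 0 with he
    have hmp : MeasurePreserving e volume volume :=
      volume_preserving_piFinSuccAbove (fun _ : Fin (m+1) => ℝ) 0
    have hlin : ∀ (u v : Fin (m+1) → ℝ), e (a • u + b • v) = a • e u + b • e v := by
      intro u v
      rfl
    set f' : ℝ × (Fin m → ℝ) → ℝ≥0∞ := fun p => f (e.symm p) with hf'def
    set g' : ℝ × (Fin m → ℝ) → ℝ≥0∞ := fun p => g (e.symm p) with hg'def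
    set h' : ℝ × (Fin m → ℝ) → ℝ≥0∞ := fun p => h (e.symm p) with hh'def
    have hf' : Measurable f' := hf.comp e.symm.measurable
    have hg' : Measurable g' := hg.comp e.symm.measurable
    have hh' : Measurable h' := hh.comp e.symm.measurable
    have hyp' : ∀ p q, f' p ^ a * g' q ^ b ≤ h' (a • p + b • q) := by
      intro p q
      have key : a • p + b • q = e (a • e.symm p + b • e.symm q) := by
        rw [hlin, e.apply_symm_apply, e.apply_symm_apply]
      calc f' p ^ a * g' q ^ b ≤ h (a • e.symm p + b • e.symm q) := hyp _ _
        _ = h' (a • p + b • q) := by rw [key, hh'def]; simp only [e.symm_apply_apply]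
    set F : ℝ → ℝ≥0∞ := fun t => ∫⁻ y, f' (t, y) with hFdef
    set G : ℝ → ℝ≥0∞ := fun t => ∫⁻ y, g' (t, y) with hGdef
    set H : ℝ → ℝ≥0∞ := fun t => ∫⁻ y, h' (t, y) with hHdef
    have hF : Measurable F := hf'.lintegral_prod_right'
    have hG : Measurable G := hg'.lintegral_prod_right'
    have hH : Measurable H := hh'.lintegral_prod_right'
    have hypFG : ∀ s t, F s ^ a * G t ^ b ≤ H (a * s + b * t) := by
      intro s t
      refine ih (fun y => f' (s, y)) (fun y => g' (t, y)) (fun y => h' (a * s + b * t, y))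
        (hf'.comp (measurable_prodMk_left)) (hg'.comp (measurable_prodMk_left))
        (hh'.comp (measurable_prodMk_left)) ?_
      intro y z
      have : (a * s + b * t, a • y + b • z) = a • ((s, y) : ℝ × (Fin m → ℝ)) + b • (t, z) := rfl
      have h2 := hyp' (s, y) (t, z)
      rw [← this] at h2
      exact h2
    have key := pl_dim1 ha hb hab hF hG hH hypFG
    have conv : ∀ (u : (Fin (m+1) → ℝ) → ℝ≥0∞) (u' : ℝ × (Fin m → ℝ) → ℝ≥0∞),
        Measurable u' → (∀ x, u x = u' (e x)) →
        ∫⁻ x, u x = ∫⁻ s, ∫⁻ y, u' (s, y) := by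
      intro u u' hu' hcomp
      calc ∫⁻ x, u x = ∫⁻ x, u' (e x) := lintegral_congr hcomp
        _ = ∫⁻ p, u' p ∂(Measure.map e volume) := (lintegral_map hu' e.measurable).symm
        _ = ∫⁻ p, u' p ∂(volume : Measure (ℝ × (Fin m → ℝ))) := by rw [hmp.map_eq]
        _ = ∫⁻ s, ∫⁻ y, u' (s, y) := by
            rw [Measure.volume_eq_prod, lintegral_prod _ hu'.aemeasurable]
    rw [conv f f' hf' (fun x => by simp [hf'def]), conv g g' hg' (fun x => by simp [hg'def]),
      conv h h' hh' (fun x => by simp [hh'def])]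
    exact key

lemma meas_indicator {P : Type*} [TopologicalSpace P] [MeasurableSpace P] [BorelSpace P]
    {D : Set P} (hDo : IsOpen D) {φ : P → ℝ} (hφc : ContinuousOn φ D) :
    Measurable (D.indicator (fun p => ENNReal.ofReal (Real.exp (-φ p)))) := by
  apply measurable_of_measurable_union_cover D Dᶜ hDo.measurableSet hDo.measurableSet.compl
    (by simp)
  · have hcont : ContinuousOn (fun p => ENNReal.ofReal (Real.exp (-φ p))) D :=
      ENNReal.continuous_ofReal.comp_continuousOn
        ((Real.continuous_exp.comp continuous_neg).comp_continuousOn hφc)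
    have heq : (fun a : D => D.indicator (fun p => ENNReal.ofReal (Real.exp (-φ p))) a)
        = fun a : D => ENNReal.ofReal (Real.exp (-φ a)) :=
      funext fun a => indicator_of_mem a.2 _
    rw [heq]
    exact (continuousOn_iff_continuous_restrict.1 hcont).measurable
  · have heq : (fun a : ↥Dᶜ => D.indicator (fun p => ENNReal.ofReal (Real.exp (-φ p))) a)
        = fun _ => 0 := funext fun a => indicator_of_notMem a.2 _
    rw [heq]
    exact measurable_const

/-- Prékopa's theorem for families: if `D ⊆ U₀ × ℝᵐ` is a convex open set with
bounded nonempty fibers over a convex domain `U₀ ⊆ ℝⁿ`, and `φ` is convex on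
`D`, then `φ̃(t) = -log ∫_{D_t} e^{-φ(t,x)} dx` is convex on `U₀`. -/
theorem stmt13 (n m : ℕ) (U₀ : Set (Fin n → ℝ)) (hU₀o : IsOpen U₀)
    (hU₀c : Convex ℝ U₀) (D : Set ((Fin n → ℝ) × (Fin m → ℝ)))
    (hDo : IsOpen D) (hDc : Convex ℝ D)
    (hDU : ∀ p ∈ D, p.1 ∈ U₀)
    (hfib : ∀ t ∈ U₀, {x | (t, x) ∈ D}.Nonempty ∧ IsBounded {x | (t, x) ∈ D})
    (φ : (Fin n → ℝ) × (Fin m → ℝ) → ℝ) (hφ : ConvexOn ℝ D φ) :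
    ConvexOn ℝ U₀
      (fun t => -Real.log (∫ x in {x | (t, x) ∈ D}, Real.exp (-φ (t, x)))) := by
  classical
  have hφcont : ContinuousOn φ D := hφ.continuousOn hDo
  set S : (Fin n → ℝ) → Set (Fin m → ℝ) := fun t => {x | (t, x) ∈ D} with hS
  have hSopen : ∀ t, IsOpen (S t) := fun t => hDo.preimage (Continuous.prodMk_right t)
  have hSmeas : ∀ t, MeasurableSet (S t) := fun t => (hSopen t).measurableSet
  set ρ : ((Fin n → ℝ) × (Fin m → ℝ)) → ℝ≥0∞ := fun p => ENNReal.ofReal (Real.exp (-φ p))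
    with hρ
  set ft : (Fin n → ℝ) → (Fin m → ℝ) → ℝ≥0∞ := fun t x => D.indicator ρ (t, x) with hft
  have hftmeas : ∀ t, Measurable (ft t) :=
    fun t => (meas_indicator hDo hφcont).comp measurable_prodMk_left
  set G : (Fin n → ℝ) → ℝ≥0∞ := fun t => ∫⁻ x, ft t x with hG
  have hGset : ∀ t, G t = ∫⁻ x in S t, ρ (t, x) := by
    intro t
    rw [hG, ← lintegral_indicator (hSmeas t)]
    refine lintegral_congr fun x => ?_
    by_cases hx : (t, x) ∈ D
    · simp only [hft]
      rw [indicator_of_mem hx, indicator_of_mem (by exact hx : x ∈ S t)]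
    · simp only [hft]
      rw [indicator_of_notMem hx, indicator_of_notMem (by exact hx : x ∉ S t)]
  have hlow : ∀ t ∈ U₀, ∃ c : ℝ, ∀ x ∈ S t, c ≤ φ (t, x) := by
    intro t ht
    obtain ⟨⟨p, hp⟩, hbd⟩ := hfib t ht
    set K : Set ((Fin n → ℝ) × (Fin m → ℝ)) :=
      (fun x => ((1:ℝ)/2) • ((t, p) : (Fin n → ℝ) × (Fin m → ℝ)) + ((1:ℝ)/2) • (t, x)) ''
        closure (S t) with hK
    have hKcomp : IsCompact K := hbd.isCompact_closure.image (by continuity)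
    have hKD : K ⊆ D := by
      rintro _ ⟨x, hx, rfl⟩
      have hx' : (t, x) ∈ closure D := by
        have h1 : (t, x) ∈ closure ((fun x => (t, x)) '' S t) :=
          closure_mono (image_mono (subset_refl _)) <|
            image_closure_subset_closure_image (Continuous.prodMk_right t) ⟨x, hx, rfl⟩
        refine closure_mono ?_ h1
        rintro _ ⟨y, hy, rfl⟩; exact hy
      have h2 := hDc.combo_interior_closure_mem_interior
        (by rwa [hDo.interior_eq] : ((t, p) : (Fin n → ℝ) × (Fin m → ℝ)) ∈ interior D) hx'
        (show (0:ℝ) < 1/2 by norm_num) (show (0:ℝ) ≤ 1/2 by norm_num) (by norm_num)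
      rwa [hDo.interior_eq] at h2
    have hKne : K.Nonempty := ⟨_, ⟨p, subset_closure hp, rfl⟩⟩
    obtain ⟨q, hqK, hqmin⟩ := hKcomp.exists_isMinOn hKne (hφcont.mono hKD)
    refine ⟨2 * φ q - φ (t, p), fun x hx => ?_⟩
    have hxD : (t, x) ∈ D := hx
    have hmid : ((1:ℝ)/2) • ((t, p) : (Fin n → ℝ) × (Fin m → ℝ)) + ((1:ℝ)/2) • (t, x) ∈ K :=
      ⟨x, subset_closure hx, rfl⟩
    have hconv := hφ.2 (show ((t, p) : (Fin n → ℝ) × (Fin m → ℝ)) ∈ D from hp) hxD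
      (by norm_num : (0:ℝ) ≤ 1/2) (by norm_num : (0:ℝ) ≤ 1/2) (by norm_num)
    have hq2 : φ q ≤ φ (((1:ℝ)/2) • ((t, p) : (Fin n → ℝ) × (Fin m → ℝ)) + ((1:ℝ)/2) • (t, x)) := hqmin hmid
    simp only [smul_eq_mul] at hconv
    linarith
  have hGpos : ∀ t ∈ U₀, 0 < G t := by
    intro t ht
    obtain ⟨⟨x₀, hx₀⟩, hbd⟩ := hfib t ht
    obtain ⟨ε, hε, hball⟩ := Metric.isOpen_iff.1 (hSopen t) x₀ hx₀
    have hcb : Metric.closedBall x₀ (ε/2) ⊆ S t :=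
      (Metric.closedBall_subset_ball (by linarith)).trans hball
    have hcomp : IsCompact (Metric.closedBall x₀ (ε/2)) := isCompact_closedBall _ _
    have hcont' : ContinuousOn (fun x => φ (t, x)) (S t) :=
      hφcont.comp (Continuous.prodMk_right t).continuousOn (fun x hx => hx)
    obtain ⟨q, hq, hqmax⟩ := hcomp.exists_isMaxOn
      ⟨x₀, by simp [Metric.mem_closedBall]; positivity⟩ (hcont'.mono hcb)
    have hlb : ∀ x, (Metric.ball x₀ (ε/2)).indicator
        (fun _ => ENNReal.ofReal (Real.exp (-φ (t, q)))) x ≤ ft t x := by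
      intro x
      by_cases hx : x ∈ Metric.ball x₀ (ε/2)
      · rw [indicator_of_mem hx]
        have hxS : x ∈ S t := hcb (Metric.ball_subset_closedBall hx)
        simp only [hft]
        rw [Set.indicator_of_mem (show ((t, x) : (Fin n → ℝ) × (Fin m → ℝ)) ∈ D from hxS) ρ]
        exact ENNReal.ofReal_le_ofReal (Real.exp_le_exp.2
          (neg_le_neg (hqmax (Metric.ball_subset_closedBall hx))))
      · rw [indicator_of_notMem hx]; exact zero_le
    calc (0:ℝ≥0∞)
        < ENNReal.ofReal (Real.exp (-φ (t, q))) * volume (Metric.ball x₀ (ε/2)) :=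
          ENNReal.mul_pos (by simp [Real.exp_pos]) (Metric.measure_ball_pos volume x₀ (by positivity)).ne'
      _ = ∫⁻ x, (Metric.ball x₀ (ε/2)).indicator
            (fun _ => ENNReal.ofReal (Real.exp (-φ (t, q)))) x := by
          rw [lintegral_indicator Metric.isOpen_ball.measurableSet, setLIntegral_const]
      _ ≤ G t := lintegral_mono hlb
  have hGtop : ∀ t ∈ U₀, G t ≠ ⊤ := by
    intro t ht
    obtain ⟨c, hc⟩ := hlow t ht
    have hub : ∀ x, ft t x ≤ (S t).indicator (fun _ => ENNReal.ofReal (Real.exp (-c))) x := by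
      intro x
      by_cases hx : x ∈ S t
      · simp only [hft]
        rw [Set.indicator_of_mem (show ((t, x) : (Fin n → ℝ) × (Fin m → ℝ)) ∈ D from hx) ρ,
          Set.indicator_of_mem hx]
        exact ENNReal.ofReal_le_ofReal (Real.exp_le_exp.2 (by linarith [hc x hx]))
      · simp only [hft]
        rw [Set.indicator_of_notMem (show ((t, x) : (Fin n → ℝ) × (Fin m → ℝ)) ∉ D from hx) ρ,
          Set.indicator_of_notMem hx]
    refine ne_top_of_le_ne_top ?_ (lintegral_mono hub)
    rw [lintegral_indicator (hSmeas t), setLIntegral_const]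
    exact ENNReal.mul_ne_top ENNReal.ofReal_ne_top ((hfib t ht).2.measure_lt_top).ne
  have hInt : ∀ t ∈ U₀, ∫ x in S t, Real.exp (-φ (t, x)) = (G t).toReal := by
    intro t ht
    have hmble : AEStronglyMeasurable (fun x => Real.exp (-φ (t, x)))
        (volume.restrict (S t)) := by
      apply ContinuousOn.aestronglyMeasurable ?_ (hSmeas t)
      exact (Real.continuous_exp.comp continuous_neg).comp_continuousOn
        (hφcont.comp (Continuous.prodMk_right t).continuousOn (fun x hx => hx))
    rw [integral_eq_lintegral_of_nonneg_ae
      (Filter.Eventually.of_forall fun x => (Real.exp_pos _).le) hmble, hGset t]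
  refine ⟨hU₀c, ?_⟩
  intro t₀ ht₀ t₁ ht₁ a b ha hb hab
  rcases eq_or_lt_of_le ha with rfl | ha'
  · have hb1 : b = 1 := by linarith
    subst hb1; simp
  rcases eq_or_lt_of_le hb with rfl | hb'
  · have ha1 : a = 1 := by linarith
    subst ha1; simp
  set tc := a • t₀ + b • t₁ with htcdef
  have htc : tc ∈ U₀ := hU₀c ht₀ ht₁ ha hb hab
  have hpl := pl_dim ha' hb' hab m (ft t₀) (ft t₁) (ft tc)
    (hftmeas t₀) (hftmeas t₁) (hftmeas tc) ?_
  · -- conclusion from hpl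
    have hineq : (G t₀).toReal ^ a * (G t₁).toReal ^ b ≤ (G tc).toReal := by
      have h1 := ENNReal.toReal_mono (hGtop tc htc) hpl
      rwa [ENNReal.toReal_mul, ← ENNReal.toReal_rpow, ← ENNReal.toReal_rpow] at h1
    have hr₀ : 0 < (G t₀).toReal := ENNReal.toReal_pos (hGpos t₀ ht₀).ne' (hGtop t₀ ht₀)
    have hr₁ : 0 < (G t₁).toReal := ENNReal.toReal_pos (hGpos t₁ ht₁).ne' (hGtop t₁ ht₁)
    have hlog : a * Real.log (G t₀).toReal + b * Real.log (G t₁).toReal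
        ≤ Real.log (G tc).toReal := by
      calc a * Real.log (G t₀).toReal + b * Real.log (G t₁).toReal
          = Real.log ((G t₀).toReal ^ a * (G t₁).toReal ^ b) := by
            rw [Real.log_mul (by positivity) (by positivity),
              Real.log_rpow hr₀, Real.log_rpow hr₁]
      _ ≤ Real.log (G tc).toReal := Real.log_le_log (by positivity) hineq
    show -Real.log (∫ x in S tc, Real.exp (-φ (tc, x)))
        ≤ a • -Real.log (∫ x in S t₀, Real.exp (-φ (t₀, x)))
          + b • -Real.log (∫ x in S t₁, Real.exp (-φ (t₁, x)))
    rw [hInt t₀ ht₀, hInt t₁ ht₁, hInt tc htc]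
    simp only [smul_eq_mul]
    linarith
  · -- the PL hypothesis
    intro x y
    by_cases hx : (t₀, x) ∈ D
    · by_cases hy : (t₁, y) ∈ D
      · have hmem : (tc, a • x + b • y) ∈ D := hDc hx hy ha'.le hb'.le hab
        simp only [hft]
        rw [indicator_of_mem hx, indicator_of_mem hy, indicator_of_mem hmem]
        simp only [hρ]
        rw [ENNReal.ofReal_rpow_of_nonneg (Real.exp_pos _).le ha'.le,
          ENNReal.ofReal_rpow_of_nonneg (Real.exp_pos _).le hb'.le,
          ← ENNReal.ofReal_mul (by positivity)]
        apply ENNReal.ofReal_le_ofReal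
        rw [← Real.exp_mul, ← Real.exp_mul, ← Real.exp_add]
        apply Real.exp_le_exp.2
        have hcvx := hφ.2 hx hy ha'.le hb'.le hab
        have hpt : a • ((t₀, x) : (Fin n → ℝ) × (Fin m → ℝ)) + b • (t₁, y)
            = (tc, a • x + b • y) := rfl
        rw [hpt] at hcvx
        simp only [smul_eq_mul] at hcvx
        linarith
      · simp only [hft]
        rw [indicator_of_notMem hy, ENNReal.zero_rpow_of_pos hb', mul_zero]
        exact zero_le
    · simp only [hft]
      rw [indicator_of_notMem hx, ENNReal.zero_rpow_of_pos ha', zero_mul]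
      exact zero_le
end
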